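/- For a positive integer $\delta$, write $\delta = \delta_s^2 \delta_f$ with $\delta_f$ squarefree (this determines $\delta_s, \delta_f$ uniquely). Then for every positive integer $m$, every integer $k$, and every function $f : \mathbb{Z}_{>0} \to \mathbb{C}$: $\sum_{\delta \mid m} (m/\delta)^{k-1} f(\delta_s) = \sum_{\substack{l > 0 \\ l^2 \mid m}} \sigma_{k-1}(m/l^2) \sum_{l' \mid l} \mu(l') f(l/l')$, where $\sigma_{k-1}(n) = \sum_{d \mid n} d^{k-1}$ and $\mu$ is the Möbius function. -/

import Mathlib

/-!
In the ring of arithmetic functions, with `P n = n ^ (k - 1)`, the left side is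
`(P * g) m` for `g δ = f (δ_s)`, and the right side is `(P * ζ * onSquares (μ * f)) m`,
since `σ_{k-1} = P * ζ`. So it suffices that `g = ζ * onSquares (μ * f)`, i.e.
`f (δ_s) = ∑_{l² ∣ δ} (μ * f) l`. This is Möbius inversion, because `l² ∣ δ_s² δ_f`
with `δ_f` squarefree exactly when `l ∣ δ_s`.
-/

open Finset ArithmeticFunction

theorem Nat.div_ne_zero_of_mem_divisors {n d : ℕ} (h : d ∈ n.divisors) : n / d ≠ 0 :=
  (Nat.div_ne_zero_iff_of_dvd (Nat.dvd_of_mem_divisors h)).2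
    ⟨Nat.ne_zero_of_mem_divisors h, (Nat.pos_of_mem_divisors h).ne'⟩

theorem Nat.sq_dvd_sq_mul_iff_of_squarefree {s a l : ℕ} (ha : Squarefree a) (hs : s ≠ 0) :
    l ^ 2 ∣ s ^ 2 * a ↔ l ∣ s := by
  refine ⟨fun h => ?_, fun h => (pow_dvd_pow_of_dvd h 2).mul_right a⟩
  have hl : l ≠ 0 := by rintro rfl; simp [hs, ha.ne_zero] at h
  rw [← Nat.factorization_le_iff_dvd hl hs]
  intro p
  have hp := (Nat.factorization_le_iff_dvd (by positivity) (by simp [hs, ha.ne_zero])).2 h p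
  simp only [Nat.factorization_mul (pow_ne_zero 2 hs) ha.ne_zero, Nat.factorization_pow,
    Finsupp.add_apply, Finsupp.smul_apply, smul_eq_mul] at hp
  have := ha.natFactorization_le_one p
  omega

theorem Nat.divisors_filter_sq_dvd {n s a : ℕ} (hn : n ≠ 0) (ha : Squarefree a)
    (h : n = s ^ 2 * a) : {l ∈ n.divisors | l ^ 2 ∣ n} = s.divisors := by
  have hs : s ≠ 0 := by rintro rfl; simp_all
  ext l
  simp only [mem_filter, Nat.mem_divisors, h, Nat.sq_dvd_sq_mul_iff_of_squarefree ha hs]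
  exact ⟨fun hl => ⟨hl.2, hs⟩,
    fun hl => ⟨⟨(hl.1.trans (dvd_pow_self s two_ne_zero)).mul_right a, h ▸ hn⟩, hl.1⟩⟩

namespace ArithmeticFunction

variable {R : Type*}

def ofFun [Zero R] (f : ℕ → R) : ArithmeticFunction R :=
  ⟨fun n => if n = 0 then 0 else f n, if_pos rfl⟩

theorem ofFun_apply [Zero R] (f : ℕ → R) {n : ℕ} (hn : n ≠ 0) : ofFun f n = f n := if_neg hn

/-- `onSquares h` sends `l ^ 2` to `h l` and non-squares to `0`; the sum has at most one term. -/
def onSquares [AddCommMonoid R] (h : ArithmeticFunction R) : ArithmeticFunction R :=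
  ⟨fun n => ∑ l ∈ n.divisors with l ^ 2 = n, h l, by simp⟩

theorem onSquares_apply [AddCommMonoid R] (h : ArithmeticFunction R) (n : ℕ) :
    onSquares h n = ∑ l ∈ n.divisors with l ^ 2 = n, h l := rfl

theorem mul_apply_eq_sum_divisors [Semiring R] (g h : ArithmeticFunction R) (n : ℕ) :
    (g * h) n = ∑ d ∈ n.divisors, g (n / d) * h d :=
  Nat.sum_divisorsAntidiagonal' fun a b => g a * h b

theorem mul_onSquares_apply [Semiring R] (g h : ArithmeticFunction R) (n : ℕ) :
    (g * onSquares h) n = ∑ l ∈ n.divisors with l ^ 2 ∣ n, g (n / l ^ 2) * h l := by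
  simp only [mul_apply_eq_sum_divisors, onSquares_apply, mul_sum]
  rw [sum_comm' (t' := {l ∈ n.divisors | l ^ 2 ∣ n}) (s' := fun l => {l ^ 2})]
  · simp
  · intro d l
    simp only [mem_filter, Nat.mem_divisors, mem_singleton]
    constructor
    · rintro ⟨⟨hdn, hn⟩, ⟨-, -⟩, rfl⟩
      exact ⟨rfl, ⟨(dvd_pow_self l two_ne_zero).trans hdn, hn⟩, hdn⟩
    · rintro ⟨rfl, ⟨-, hn⟩, hln⟩
      exact ⟨⟨hln, hn⟩, ⟨dvd_pow_self l two_ne_zero, fun h => hn (by simp_all)⟩, rfl⟩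

theorem zeta_mul_onSquares_apply [Semiring R] (h : ArithmeticFunction R) (n : ℕ) :
    ((zeta : ArithmeticFunction R) * onSquares h) n = ∑ l ∈ n.divisors with l ^ 2 ∣ n, h l := by
  rw [mul_onSquares_apply]
  refine sum_congr rfl fun l hl => ?_
  obtain ⟨hl, hln⟩ := mem_filter.1 hl
  have hquot : n / l ^ 2 ≠ 0 :=
    Nat.div_ne_zero_of_mem_divisors (Nat.mem_divisors.2 ⟨hln, Nat.ne_zero_of_mem_divisors hl⟩)
  rw [natCoe_apply, zeta_apply_ne hquot, Nat.cast_one, one_mul]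

theorem ofFun_comp_eq_zeta_mul_onSquares [Ring R] {sq : ℕ → ℕ}
    (hsq : ∀ δ : ℕ, 0 < δ → ∃ a : ℕ, Squarefree a ∧ δ = sq δ ^ 2 * a) (f : ℕ → R) :
    ofFun (f ∘ sq) =
      (zeta : ArithmeticFunction R) * onSquares (moebius * ofFun f : ArithmeticFunction R) := by
  ext n
  rcases eq_or_ne n 0 with rfl | hn
  · simp
  obtain ⟨a, ha, hna⟩ := hsq n (Nat.pos_of_ne_zero hn)
  have hs : sq n ≠ 0 := by rintro h; simp [h, hn] at hna
  rw [zeta_mul_onSquares_apply, Nat.divisors_filter_sq_dvd hn ha hna, ← coe_zeta_mul_apply,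
    ← mul_assoc, coe_zeta_mul_coe_moebius, one_mul, ofFun_apply _ hn, ofFun_apply _ hs,
    Function.comp_apply]

end ArithmeticFunction

theorem hecke_U_V_combinatorial_identity_general
    (sq : ℕ → ℕ) (hsq : ∀ δ : ℕ, 0 < δ → ∃ fpart : ℕ, Squarefree fpart ∧ δ = (sq δ) ^ 2 * fpart)
    (m : ℕ) (k : ℤ) (f : ℕ → ℂ) :
    ∑ δ ∈ m.divisors, ((m / δ : ℕ) : ℂ) ^ (k - 1) * f (sq δ)
      = ∑ l ∈ m.divisors.filter (fun l => l ^ 2 ∣ m),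
          (∑ d ∈ (m / l ^ 2).divisors, ((d : ℕ) : ℂ) ^ (k - 1)) *
            ∑ l' ∈ l.divisors, ((moebius l' : ℤ) : ℂ) * f (l / l') := by
  let P : ArithmeticFunction ℂ := ofFun fun n => (n : ℂ) ^ (k - 1)
  calc _ = (P * ofFun (f ∘ sq)) m := by
        rw [mul_apply_eq_sum_divisors]
        refine sum_congr rfl fun δ hδ => ?_
        rw [ofFun_apply _ (Nat.pos_of_mem_divisors hδ).ne',
          ofFun_apply _ (Nat.div_ne_zero_of_mem_divisors hδ), Function.comp_apply]
    _ = (P * zeta * onSquares (moebius * ofFun f : ArithmeticFunction ℂ)) m := by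
        rw [ofFun_comp_eq_zeta_mul_onSquares hsq, mul_assoc]
    _ = _ := by
        rw [mul_onSquares_apply]
        refine sum_congr rfl fun l _ => ?_
        rw [coe_mul_zeta_apply, mul_apply,
          Nat.sum_divisorsAntidiagonal fun a b => (moebius : ArithmeticFunction ℂ) a * ofFun f b]
        congr 1
        · exact sum_congr rfl fun d hd => ofFun_apply _ (Nat.pos_of_mem_divisors hd).ne'
        · exact sum_congr rfl fun d hd => by
            rw [intCoe_apply, ofFun_apply _ (Nat.div_ne_zero_of_mem_divisors hd)]

/-- Writing each positive integer `δ = δ_s^2 δ_f` with `δ_f` squarefree (so `sq δ = δ_s`),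
for every `m > 0`, integer `k` and `f : ℕ → ℂ`:
`∑_{δ ∣ m} (m/δ)^{k-1} f(δ_s) = ∑_{l^2 ∣ m} σ_{k-1}(m/l^2) ∑_{l' ∣ l} μ(l') f(l/l')`. -/
theorem hecke_U_V_combinatorial_identity
    (sq : ℕ → ℕ) (hsq : ∀ δ : ℕ, 0 < δ → ∃ fpart : ℕ, Squarefree fpart ∧ δ = (sq δ) ^ 2 * fpart)
    (m : ℕ) (hm : 0 < m) (k : ℤ) (f : ℕ → ℂ) :
    ∑ δ ∈ m.divisors, ((m / δ : ℕ) : ℂ) ^ (k - 1) * f (sq δ)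
      = ∑ l ∈ m.divisors.filter (fun l => l ^ 2 ∣ m),
          (∑ d ∈ (m / l ^ 2).divisors, ((d : ℕ) : ℂ) ^ (k - 1)) *
            ∑ l' ∈ l.divisors, ((moebius l' : ℤ) : ℂ) * f (l / l') :=
  hecke_U_V_combinatorial_identity_general sq hsq m k f
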